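/- arXiv:2502.17950 — 4 statements merged into one kernel-verified Lean document; each statement's English description precedes it below -/
import Mathlib

section
/- Let 𝒦f(ω) = (1/(2π²)) ∫_{ℝ³} ‖ω-η‖^(-2) f(η) dη. For every ϑ > 1 and every integrable f : ℝ³ → ℂ, ∫_{ℝ³} (1+‖ω‖²)^(-ϑ/2) |𝒦f(ω)| dω ≤ κ(ϑ) ∫_{ℝ³} |f(ω)| dω, where κ(ϑ) = 2 Γ((ϑ-1)/2)/(√π Γ(ϑ/2)). -/
/-!
Bounding `|𝒦f|` by `(1 / 2π²) ∫ ‖ω - η‖⁻² |f(η)| dη` and applying Tonelli, it suffices to bound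
`∫ w(ω) ‖ω - η‖⁻² dω` uniformly in `η`, where `w = (1 + ‖·‖²)^(-ϑ/2)`. Both `w` and `‖·‖⁻²` are
radially decreasing, so where `‖ω‖ ≤ ‖ω - η‖` the kernel can be recentred at `0`, and elsewhere the
weight can be recentred at `η`; hence the integral is at most `2 ∫ w(ω) ‖ω‖⁻² dω`. In polar
coordinates this is `8π ∫₀^∞ (1 + r²)^(-ϑ/2) dr = 4π^(3/2) Γ((ϑ-1)/2) / Γ(ϑ/2)`, the last integral
being computed by writing `(1 + r²)^(-s)` as a Gamma integral and integrating out a Gaussian.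
-/

open MeasureTheory Real

noncomputable def Kop (f : EuclideanSpace ℝ (Fin 3) → ℂ)
    (ω : EuclideanSpace ℝ (Fin 3)) : ℂ :=
  ((1 / (2 * Real.pi ^ 2)) : ℝ) •
    ∫ η : EuclideanSpace ℝ (Fin 3), (‖ω - η‖ ^ (-(2 : ℝ)) : ℝ) • f η

open Set
open scoped ENNReal

theorem lintegral_mul_comp_sub_le_two_mul {E : Type*} [NormedAddCommGroup E] [MeasurableSpace E]
    [MeasurableAdd E] (μ : Measure E) [μ.IsAddRightInvariant] {F G : E → ℝ≥0∞}
    (hF : Measurable F) (hG : Measurable G) (hF_anti : ∀ x y : E, ‖x‖ ≤ ‖y‖ → F y ≤ F x)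
    (hG_anti : ∀ x y : E, ‖x‖ ≤ ‖y‖ → G y ≤ G x) (η : E) :
    ∫⁻ x, F x * G (x - η) ∂μ ≤ 2 * ∫⁻ x, F x * G x ∂μ := by
  have hpt : ∀ x, F x * G (x - η) ≤ F x * G x + F (x - η) * G (x - η) := by
    intro x
    rcases le_total ‖x‖ ‖x - η‖ with h | h
    · exact le_add_right (by gcongr; exact hG_anti _ _ h)
    · exact le_add_left (by gcongr; exact hF_anti _ _ h)
  calc ∫⁻ x, F x * G (x - η) ∂μ
      ≤ ∫⁻ x, F x * G x + F (x - η) * G (x - η) ∂μ := lintegral_mono hpt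
    _ = 2 * ∫⁻ x, F x * G x ∂μ := by
      rw [lintegral_add_left (f := fun x => F x * G x) (hF.mul hG),
        lintegral_sub_right_eq_self (fun x => F x * G x), two_mul]

theorem lintegral_mul_lintegral_comp_sub_mul_le {E : Type*} [AddGroup E] [MeasurableSpace E]
    [MeasurableSub₂ E] (μ : Measure E) [SFinite μ] {F G N : E → ℝ≥0∞} (hF : Measurable F)
    (hG : Measurable G) (hN : AEMeasurable N μ) {C : ℝ≥0∞}
    (hC : ∀ y, ∫⁻ x, F x * G (x - y) ∂μ ≤ C) :
    ∫⁻ x, F x * ∫⁻ y, G (x - y) * N y ∂μ ∂μ ≤ C * ∫⁻ y, N y ∂μ := by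
  have hmeas : AEMeasurable (Function.uncurry fun x y => F x * (G (x - y) * N y)) (μ.prod μ) :=
    (hF.comp measurable_fst).aemeasurable.mul
      ((hG.comp (measurable_fst.sub measurable_snd)).aemeasurable.mul hN.comp_snd)
  calc ∫⁻ x, F x * ∫⁻ y, G (x - y) * N y ∂μ ∂μ
      ≤ ∫⁻ x, ∫⁻ y, F x * (G (x - y) * N y) ∂μ ∂μ :=
        lintegral_mono fun x => lintegral_const_mul_le _ _
    _ = ∫⁻ y, (∫⁻ x, F x * G (x - y) ∂μ) * N y ∂μ := by
        rw [lintegral_lintegral_swap hmeas]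
        refine lintegral_congr fun y => ?_
        simp_rw [← mul_assoc]
        exact lintegral_mul_const _ (hF.mul (hG.comp (measurable_id.sub_const y)))
    _ ≤ ∫⁻ y, C * N y ∂μ := lintegral_mono fun y => by gcongr; exact hC y
    _ = C * ∫⁻ y, N y ∂μ := lintegral_const_mul'' C hN

theorem lintegral_fun_norm_addHaar {E : Type*} [NormedAddCommGroup E] [NormedSpace ℝ E]
    [FiniteDimensional ℝ E] [MeasurableSpace E] [BorelSpace E] [Nontrivial E] (μ : Measure E)
    [μ.IsAddHaarMeasure] {g : ℝ → ℝ≥0∞} (hg : Measurable g) :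
    ∫⁻ x, g ‖x‖ ∂μ = Module.finrank ℝ E * μ (Metric.ball 0 1) *
      ∫⁻ y in Ioi 0, ENNReal.ofReal (y ^ (Module.finrank ℝ E - 1)) * g y := by
  calc ∫⁻ x, g ‖x‖ ∂μ = ∫⁻ x : ({0}ᶜ : Set E), g ‖(x : E)‖ ∂(μ.comap (↑)) := by
        rw [lintegral_subtype_comap (measurableSet_singleton 0).compl (fun x => g ‖x‖),
          restrict_compl_singleton]
    _ = ∫⁻ p : Metric.sphere (0 : E) 1 × Ioi (0 : ℝ), g p.2
          ∂(μ.toSphere.prod (Measure.volumeIoiPow (Module.finrank ℝ E - 1))) := by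
      simpa using (μ.measurePreserving_homeomorphUnitSphereProd.lintegral_comp_emb
        (Homeomorph.measurableEmbedding _) (g ∘ Subtype.val ∘ Prod.snd))
    _ = μ.toSphere univ *
          ∫⁻ r : Ioi (0 : ℝ), g r ∂(Measure.volumeIoiPow (Module.finrank ℝ E - 1)) := by
      rw [lintegral_prod (fun p : Metric.sphere (0 : E) 1 × Ioi (0 : ℝ) => g p.2)
        (hg.comp (measurable_subtype_coe.comp measurable_snd)).aemeasurable]
      simp [lintegral_const, mul_comm]
    _ = _ := by
      rw [Measure.toSphere_apply_univ, Measure.volumeIoiPow,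
        lintegral_withDensity_eq_lintegral_mul _ (measurable_subtype_coe.pow_const _).ennreal_ofReal
          (g := fun r : Ioi (0 : ℝ) => g r) (hg.comp measurable_subtype_coe)]
      exact congrArg _ (lintegral_subtype_comap measurableSet_Ioi
        (fun y : ℝ => ENNReal.ofReal (y ^ (Module.finrank ℝ E - 1)) * g y))

theorem lintegral_rpow_mul_exp_neg_mul_Ioi {a r : ℝ} (ha : 0 < a) (hr : 0 < r) :
    ∫⁻ t in Ioi 0, ENNReal.ofReal (t ^ (a - 1) * exp (-(r * t)))
      = ENNReal.ofReal ((1 / r) ^ a * Gamma a) := by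
  have hint : IntegrableOn (fun t : ℝ => t ^ (a - 1) * exp (-(r * t))) (Ioi 0) := by
    simpa using integrableOn_rpow_mul_exp_neg_mul_rpow (p := 1) (by linarith : -1 < a - 1)
      one_pos hr
  rw [← integral_rpow_mul_exp_neg_mul_Ioi ha hr, ofReal_integral_eq_lintegral_ofReal hint]
  filter_upwards [ae_restrict_mem measurableSet_Ioi] with t (ht : 0 < t)
  positivity

theorem lintegral_exp_neg_mul_sq_Ioi {b : ℝ} (hb : 0 < b) :
    ∫⁻ y in Ioi 0, ENNReal.ofReal (exp (-b * y ^ 2)) = ENNReal.ofReal (√(π / b) / 2) := by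
  rw [← integral_gaussian_Ioi, ofReal_integral_eq_lintegral_ofReal
    (integrable_exp_neg_mul_sq hb).integrableOn (ae_of_all _ fun y => (exp_pos _).le)]

theorem lintegral_one_add_sq_rpow_neg {s : ℝ} (hs : 1 / 2 < s) :
    ∫⁻ y in Ioi 0, ENNReal.ofReal ((1 + y ^ 2) ^ (-s))
      = ENNReal.ofReal (√π * Gamma (s - 1 / 2) / (2 * Gamma s)) := by
  have hΓ : 0 < Gamma s := Gamma_pos_of_pos (by linarith)
  have hs' : 0 < s - 1 / 2 := by linarith
  -- `Γ(s) (1 + y²)^(-s) = ∫ t^(s-1) e^(-(1+y²)t) dt`; swapping the integrals leaves a Gaussian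
  -- in `y`.
  have h_gamma : ∀ y : ℝ, ENNReal.ofReal (Gamma s) * ENNReal.ofReal ((1 + y ^ 2) ^ (-s))
      = ∫⁻ t in Ioi 0, ENNReal.ofReal (t ^ (s - 1) * exp (-((1 + y ^ 2) * t))) := by
    intro y
    have hy : 0 < 1 + y ^ 2 := by positivity
    rw [lintegral_rpow_mul_exp_neg_mul_Ioi (by linarith) hy, ← ENNReal.ofReal_mul hΓ.le,
      one_div, inv_rpow hy.le, ← rpow_neg hy.le, mul_comm]
  have h_gauss : ∀ t ∈ Ioi (0 : ℝ),
      ∫⁻ y in Ioi 0, ENNReal.ofReal (t ^ (s - 1) * exp (-((1 + y ^ 2) * t)))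
        = ENNReal.ofReal (√π / 2) * ENNReal.ofReal (exp (-t) * t ^ (s - 1 / 2 - 1)) := by
    intro t (ht : 0 < t)
    have hsplit : ∀ y : ℝ, t ^ (s - 1) * exp (-((1 + y ^ 2) * t))
        = t ^ (s - 1) * exp (-t) * exp (-t * y ^ 2) := by
      intro y
      rw [mul_assoc, ← exp_add]
      ring_nf
    simp_rw [hsplit, ENNReal.ofReal_mul (by positivity : 0 ≤ t ^ (s - 1) * exp (-t))]
    rw [lintegral_const_mul _ (by fun_prop), lintegral_exp_neg_mul_sq_Ioi ht,
      ← ENNReal.ofReal_mul (by positivity), ← ENNReal.ofReal_mul (by positivity)]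
    congr 1
    rw [sqrt_div pi_pos.le, sqrt_eq_rpow t, div_eq_mul_inv _ (t ^ _), ← rpow_neg ht.le,
      show s - 1 / 2 - 1 = (s - 1) + -(1 / 2) by ring, rpow_add ht]
    ring
  have key : ENNReal.ofReal (Gamma s) * ∫⁻ y in Ioi 0, ENNReal.ofReal ((1 + y ^ 2) ^ (-s))
      = ENNReal.ofReal (√π / 2) * ENNReal.ofReal (Gamma (s - 1 / 2)) := by
    rw [← lintegral_const_mul _ (by fun_prop)]
    simp_rw [h_gamma]
    rw [lintegral_lintegral_swap (by fun_prop), setLIntegral_congr_fun measurableSet_Ioi h_gauss,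
      lintegral_const_mul _ (by fun_prop), Gamma_eq_integral hs',
      ofReal_integral_eq_lintegral_ofReal (GammaIntegral_convergent hs')]
    filter_upwards [ae_restrict_mem measurableSet_Ioi] with t (ht : 0 < t)
    positivity
  rw [← ENNReal.mul_right_inj (by simpa using hΓ) ENNReal.ofReal_ne_top, key,
    ← ENNReal.ofReal_mul (by positivity), ← ENNReal.ofReal_mul hΓ.le]
  congr 1
  field_simp

theorem ENNReal.ofReal_rpow_le {x : ℝ} (hx : 0 ≤ x) (p : ℝ) :
    ENNReal.ofReal (x ^ p) ≤ ENNReal.ofReal x ^ p := by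
  rcases hx.lt_or_eq with hx | rfl
  · exact (ENNReal.ofReal_rpow_of_pos hx).ge
  · rcases lt_trichotomy p 0 with hp | rfl | hp
    · simp [ENNReal.zero_rpow_of_neg hp]
    · simp
    · simp [zero_rpow hp.ne', ENNReal.zero_rpow_of_pos hp]

theorem integral_le_of_lintegral_ofReal_le {α : Type*} [MeasurableSpace α] {μ : Measure α}
    {f : α → ℝ} {B : ℝ} (hf : 0 ≤ᵐ[μ] f) (hB : 0 ≤ B)
    (h : ∫⁻ x, ENNReal.ofReal (f x) ∂μ ≤ ENNReal.ofReal B) : ∫ x, f x ∂μ ≤ B := by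
  by_cases hm : AEStronglyMeasurable f μ
  · rw [integral_eq_lintegral_of_nonneg_ae hf hm]
    exact ENNReal.toReal_le_of_le_ofReal hB h
  · rwa [integral_non_aestronglyMeasurable hm]

-- Majorizing by the `ℝ≥0∞`-power, for which `0 ^ (-2) = ⊤` (the real one gives `0`), makes the
-- kernel radially antitone on all of `ℝ³`.
theorem enorm_Kop_le (f : EuclideanSpace ℝ (Fin 3) → ℂ) (ω : EuclideanSpace ℝ (Fin 3)) :
    ‖Kop f ω‖ₑ ≤ ENNReal.ofReal (1 / (2 * π ^ 2)) * ∫⁻ η, ‖ω - η‖ₑ ^ (-2 : ℝ) * ‖f η‖ₑ := by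
  rw [Kop, enorm_smul, Real.enorm_eq_ofReal (by positivity)]
  gcongr
  refine (enorm_integral_le_lintegral_enorm _).trans (lintegral_mono fun η => ?_)
  rw [enorm_smul, Real.enorm_eq_ofReal (by positivity), ← ofReal_norm (ω - η)]
  gcongr
  exact ENNReal.ofReal_rpow_le (norm_nonneg _) _

theorem lintegral_one_add_sq_rpow_mul_enorm_rpow_neg_two {ϑ : ℝ} (hϑ : 1 < ϑ) :
    ∫⁻ x : EuclideanSpace ℝ (Fin 3), ENNReal.ofReal ((1 + ‖x‖ ^ 2) ^ (-ϑ / 2)) * ‖x‖ₑ ^ (-2 : ℝ)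
      = ENNReal.ofReal (2 * π * √π * Gamma ((ϑ - 1) / 2) / Gamma (ϑ / 2)) := by
  have h := lintegral_fun_norm_addHaar (volume : Measure (EuclideanSpace ℝ (Fin 3)))
    (g := fun r => ENNReal.ofReal ((1 + r ^ 2) ^ (-ϑ / 2)) * ENNReal.ofReal r ^ (-2 : ℝ))
    (by fun_prop)
  simp only [ofReal_norm, finrank_euclideanSpace_fin, EuclideanSpace.volume_ball_fin_three] at h
  rw [h, setLIntegral_congr_fun measurableSet_Ioi
    (g := fun y => ENNReal.ofReal ((1 + y ^ 2) ^ (-(ϑ / 2))))]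
  · rw [lintegral_one_add_sq_rpow_neg (by linarith), ENNReal.ofReal_one, one_pow, one_mul,
      ← ENNReal.ofReal_natCast, ← ENNReal.ofReal_mul (by norm_num),
      ← ENNReal.ofReal_mul (by positivity),
      show ϑ / 2 - 1 / 2 = (ϑ - 1) / 2 by ring]
    congr 1
    field_simp
    ring
  · intro y (hy : 0 < y)
    have hy2 : y ^ (3 - 1) * y ^ (-2 : ℝ) = 1 := by
      rw [rpow_neg hy.le, rpow_two]
      field_simp
    dsimp only
    rw [ENNReal.ofReal_rpow_of_pos hy, mul_left_comm, ← ENNReal.ofReal_mul (by positivity), hy2,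
      ENNReal.ofReal_one, mul_one, neg_div]

theorem lintegral_one_add_sq_rpow_mul_enorm_sub_rpow_neg_two_le {ϑ : ℝ} (hϑ : 1 < ϑ)
    (η : EuclideanSpace ℝ (Fin 3)) :
    ∫⁻ x : EuclideanSpace ℝ (Fin 3),
        ENNReal.ofReal ((1 + ‖x‖ ^ 2) ^ (-ϑ / 2)) * ‖x - η‖ₑ ^ (-2 : ℝ)
      ≤ 2 * ENNReal.ofReal (2 * π * √π * Gamma ((ϑ - 1) / 2) / Gamma (ϑ / 2)) := by
  rw [← lintegral_one_add_sq_rpow_mul_enorm_rpow_neg_two hϑ]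
  refine lintegral_mul_comp_sub_le_two_mul volume (by fun_prop) (by fun_prop) ?_ ?_ η
  · intro x y h
    exact ENNReal.ofReal_le_ofReal
      (rpow_le_rpow_of_nonpos (by positivity) (by gcongr) (by linarith))
  · intro x y h
    simp only [ENNReal.rpow_neg]
    gcongr
    simpa [ofReal_norm] using ENNReal.ofReal_le_ofReal h

theorem stmt9 (ϑ : ℝ) (hϑ : 1 < ϑ) (f : EuclideanSpace ℝ (Fin 3) → ℂ)
    (hf : Integrable f) :
    ∫ ω : EuclideanSpace ℝ (Fin 3), (1 + ‖ω‖ ^ 2) ^ (-ϑ / 2) * ‖Kop f ω‖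
      ≤ (2 * Real.Gamma ((ϑ - 1) / 2) / (Real.sqrt Real.pi * Real.Gamma (ϑ / 2))) *
          ∫ ω : EuclideanSpace ℝ (Fin 3), ‖f ω‖ := by
  set c := ENNReal.ofReal (1 / (2 * π ^ 2))
  set w : EuclideanSpace ℝ (Fin 3) → ℝ≥0∞ := fun ω => ENNReal.ofReal ((1 + ‖ω‖ ^ 2) ^ (-ϑ / 2))
  have hΓ₁ : 0 < Gamma ((ϑ - 1) / 2) := Gamma_pos_of_pos (by linarith)
  have hΓ₂ : 0 < Gamma (ϑ / 2) := Gamma_pos_of_pos (by linarith)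
  have hκ : c * (2 * ENNReal.ofReal (2 * π * √π * Gamma ((ϑ - 1) / 2) / Gamma (ϑ / 2)))
      = ENNReal.ofReal (2 * Gamma ((ϑ - 1) / 2) / (√π * Gamma (ϑ / 2))) := by
    rw [← ENNReal.ofReal_ofNat, ← ENNReal.ofReal_mul (by norm_num),
      ← ENNReal.ofReal_mul (by positivity)]
    congr 1
    field_simp
    exact sq_sqrt pi_pos.le
  refine integral_le_of_lintegral_ofReal_le (ae_of_all _ fun ω => by positivity) (by positivity) ?_
  calc ∫⁻ ω, ENNReal.ofReal ((1 + ‖ω‖ ^ 2) ^ (-ϑ / 2) * ‖Kop f ω‖)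
      = ∫⁻ ω, w ω * ‖Kop f ω‖ₑ :=
        lintegral_congr fun ω => by rw [ENNReal.ofReal_mul (by positivity), ofReal_norm]
    _ ≤ ∫⁻ ω, w ω * (c * ∫⁻ η, ‖ω - η‖ₑ ^ (-2 : ℝ) * ‖f η‖ₑ) := by
      gcongr with ω
      exact enorm_Kop_le f ω
    _ = c * ∫⁻ ω, w ω * ∫⁻ η, ‖ω - η‖ₑ ^ (-2 : ℝ) * ‖f η‖ₑ := by
      rw [← lintegral_const_mul' c _ ENNReal.ofReal_ne_top]
      simp_rw [mul_left_comm]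
    _ ≤ c * (2 * ENNReal.ofReal (2 * π * √π * Gamma ((ϑ - 1) / 2) / Gamma (ϑ / 2))
          * ∫⁻ η, ‖f η‖ₑ) := by
      gcongr
      exact lintegral_mul_lintegral_comp_sub_mul_le volume (F := w)
        (G := fun x => ‖x‖ₑ ^ (-2 : ℝ)) (by fun_prop) (by fun_prop) hf.1.enorm
        (lintegral_one_add_sq_rpow_mul_enorm_sub_rpow_neg_two_le hϑ)
    _ = _ := by
      rw [← ofReal_integral_norm_eq_lintegral_enorm hf, ← mul_assoc, hκ,
        ← ENNReal.ofReal_mul (by positivity)]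
end

section
/- For 1 < ϑ ≤ 2, κ(ϑ) = 2Γ((ϑ-1)/2)/(√π Γ(ϑ/2)) ≤ 2/(ϑ-1). -/
/-!
Log-convexity of `Γ` makes `x ↦ Γ(x + a) / Γ(x)` increasing on `(0, ∞)` for every `a > 0`.
With `a = 1/2` and `ϑ/2 ≤ 1` this gives `Γ((ϑ+1)/2) / Γ(ϑ/2) ≤ Γ(3/2) / Γ(1) = √π / 2`, and
`Γ((ϑ+1)/2) = (ϑ-1)/2 · Γ((ϑ-1)/2)` turns this into the claimed bound.
-/

open Real Set

theorem ConvexOn.sub_le_sub_of_shift {𝕜 : Type*} [Field 𝕜] [LinearOrder 𝕜] [IsStrictOrderedRing 𝕜]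
    {s : Set 𝕜} {f : 𝕜 → 𝕜} (hf : ConvexOn 𝕜 s f) {a x y : 𝕜} (ha : 0 < a) (hx : x ∈ s)
    (hya : y + a ∈ s) (hxy : x ≤ y) : f (x + a) - f x ≤ f (y + a) - f y := by
  have hs := hf.1.ordConnected
  have hxa : x + a ∈ s := hs.out hx hya ⟨by linarith, by linarith⟩
  have hy : y ∈ s := hs.out hx hya ⟨hxy, by linarith⟩
  have left : slope f x (x + a) ≤ slope f x (y + a) :=
    hf.slope_mono hx ⟨hxa, by simp [ha.ne']⟩ ⟨hya, by simp; linarith⟩ (by linarith)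
  have right : slope f (y + a) x ≤ slope f (y + a) y :=
    hf.slope_mono hya ⟨hx, by simp; linarith⟩ ⟨hy, by simp [ha.ne']⟩ hxy
  rw [slope_comm f (y + a) x, slope_comm f (y + a) y] at right
  have := left.trans right
  rwa [slope_def_field, slope_def_field, add_sub_cancel_left, add_sub_cancel_left,
    div_le_div_iff_of_pos_right ha] at this

namespace Real

theorem Gamma_add_div_Gamma_monotoneOn {a : ℝ} (ha : 0 < a) :
    MonotoneOn (fun x ↦ Gamma (x + a) / Gamma x) (Ioi 0) := by
  intro x (hx : 0 < x) y (hy : 0 < y) hxy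
  have hlog := convexOn_log_Gamma.sub_le_sub_of_shift ha hx (show 0 < y + a by linarith) hxy
  simp only [Function.comp_apply] at hlog
  have pos : ∀ z : ℝ, 0 < z → 0 < Gamma (z + a) / Gamma z := fun z hz ↦
    div_pos (Gamma_pos_of_pos (by linarith)) (Gamma_pos_of_pos hz)
  have ne : ∀ z : ℝ, 0 < z → Gamma z ≠ 0 := fun z hz ↦ (Gamma_pos_of_pos hz).ne'
  rwa [← log_le_log_iff (pos x hx) (pos y hy), log_div (ne _ (by linarith)) (ne x hx),
    log_div (ne _ (by linarith)) (ne y hy)]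

theorem Gamma_three_halves : Gamma (3 / 2) = √π / 2 := by
  rw [show (3 / 2 : ℝ) = 1 / 2 + 1 by norm_num, Gamma_add_one one_half_pos.ne', Gamma_one_half_eq]
  ring

end Real

theorem stmt11 (ϑ : ℝ) (h1 : 1 < ϑ) (h2 : ϑ ≤ 2) :
    2 * Real.Gamma ((ϑ - 1) / 2) / (Real.sqrt Real.pi * Real.Gamma (ϑ / 2))
      ≤ 2 / (ϑ - 1) := by
  have hratio : Gamma (ϑ / 2 + 1 / 2) / Gamma (ϑ / 2) ≤ √π / 2 := by
    have : Gamma (ϑ / 2 + 1 / 2) / Gamma (ϑ / 2) ≤ Gamma (1 + 1 / 2) / Gamma 1 :=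
      Gamma_add_div_Gamma_monotoneOn one_half_pos (show 0 < ϑ / 2 by linarith)
        (show (0 : ℝ) < 1 by norm_num) (by linarith)
    rwa [show (1 : ℝ) + 1 / 2 = 3 / 2 by norm_num, Gamma_one, div_one, Gamma_three_halves] at this
  have hrec : Gamma (ϑ / 2 + 1 / 2) = (ϑ - 1) / 2 * Gamma ((ϑ - 1) / 2) := by
    rw [← Gamma_add_one (by linarith)]
    ring_nf
  have hΓ : 0 < Gamma (ϑ / 2) := Gamma_pos_of_pos (by linarith)
  rw [hrec, div_le_iff₀ hΓ] at hratio
  rw [div_le_div_iff₀ (by positivity) (by linarith)]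
  linarith
end

section
/- The function ϑ ↦ Γ((ϑ+1)/2)/Γ(ϑ/2) is strictly increasing on (0, ∞). -/
/-!
Log-convexity of `Γ` makes the increment `log Γ (x + h) - log Γ x` nondecreasing in `x`, so
`x ↦ Γ (x + h) / Γ x` is monotone on `(0, ∞)`. Strictness comes from the functional equation: the
ratio at `x + 1` is the ratio at `x` times `1 + h / x`, a strictly decreasing factor, so equal values
at `a < b` would force the ratio at `a + 1` above the one at `b + 1`.
-/

open Real Set

theorem ConvexOn.sub_le_sub_of_shift_s12 {s : Set ℝ} {g : ℝ → ℝ} (hg : ConvexOn ℝ s g)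
    {u v h : ℝ} (hu : u ∈ s) (hvh : v + h ∈ s) (huv : u < v) (hh : 0 < h) :
    g (u + h) - g u ≤ g (v + h) - g v := by
  have hs : OrdConnected s := hg.1.ordConnected
  have huh : u + h ∈ s := hs.out hu hvh ⟨by linarith, by linarith⟩
  have hv : v ∈ s := hs.out hu hvh ⟨huv.le, by linarith⟩
  have left : (g (u + h) - g u) / h ≤ (g (v + h) - g u) / (v + h - u) := by
    simpa using hg.secant_mono hu huh hvh (by linarith) (by linarith) (by linarith)
  have right : (g (v + h) - g u) / (v + h - u) ≤ (g (v + h) - g v) / h := by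
    have flip (a b c d : ℝ) : (a - b) / (c - d) = (b - a) / (d - c) := by
      rw [← neg_div_neg_eq, neg_sub, neg_sub]
    have := hg.secant_mono hvh hu hv (by linarith) (by linarith) (by linarith)
    rwa [flip (g u), flip (g v), add_sub_cancel_left] at this
  calc g (u + h) - g u = (g (u + h) - g u) / h * h := (div_mul_cancel₀ _ hh.ne').symm
    _ ≤ (g (v + h) - g v) / h * h := mul_le_mul_of_nonneg_right (left.trans right) hh.le
    _ = g (v + h) - g v := div_mul_cancel₀ _ hh.ne'

theorem MonotoneOn.strictMonoOn_of_shift_mul {s : Set ℝ} {f c : ℝ → ℝ} {p : ℝ}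
    (hf : MonotoneOn f s) (hs : ∀ x ∈ s, x + p ∈ s) (hpos : ∀ x ∈ s, 0 < f x)
    (hc : StrictAntiOn c s) (hshift : ∀ x ∈ s, f (x + p) = c x * f x) :
    StrictMonoOn f s := by
  intro a ha b hb hab
  refine (hf ha hb hab.le).lt_of_ne fun heq => ?_
  have hle : f (a + p) ≤ f (b + p) := hf (hs a ha) (hs b hb) (by linarith)
  rw [hshift a ha, hshift b hb, ← heq] at hle
  exact (hc ha hb hab).not_ge (le_of_mul_le_mul_right hle (hpos a ha))

namespace Real

theorem monotoneOn_Gamma_add_div_Gamma {h : ℝ} (hh : 0 < h) :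
    MonotoneOn (fun x => Gamma (x + h) / Gamma x) (Ioi 0) := by
  intro u (hu : 0 < u) v (hv : 0 < v) huv
  rcases huv.eq_or_lt with rfl | huv
  · exact le_rfl
  have huh : 0 < u + h := by linarith
  have hvh : 0 < v + h := by linarith
  have key := convexOn_log_Gamma.sub_le_sub_of_shift_s12 hu (mem_Ioi.2 hvh) huv hh
  simp only [Function.comp_apply] at key
  rwa [← log_div (Gamma_pos_of_pos huh).ne' (Gamma_pos_of_pos hu).ne',
    ← log_div (Gamma_pos_of_pos hvh).ne' (Gamma_pos_of_pos hv).ne',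
    log_le_log_iff (div_pos (Gamma_pos_of_pos huh) (Gamma_pos_of_pos hu))
      (div_pos (Gamma_pos_of_pos hvh) (Gamma_pos_of_pos hv))] at key

theorem Gamma_add_one_add_div_Gamma_add_one {x h : ℝ} (hx : 0 < x) (hxh : 0 < x + h) :
    Gamma (x + 1 + h) / Gamma (x + 1) = (1 + h / x) * (Gamma (x + h) / Gamma x) := by
  rw [add_right_comm, Gamma_add_one hxh.ne', Gamma_add_one hx.ne']
  field_simp [(Gamma_pos_of_pos hx).ne']

theorem strictMonoOn_Gamma_add_div_Gamma {h : ℝ} (hh : 0 < h) :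
    StrictMonoOn (fun x => Gamma (x + h) / Gamma x) (Ioi 0) := by
  refine (monotoneOn_Gamma_add_div_Gamma hh).strictMonoOn_of_shift_mul (p := 1)
    (c := fun x => 1 + h / x) (fun x (hx : 0 < x) => ?_) (fun x (hx : 0 < x) => ?_) ?_
    (fun x (hx : 0 < x) => Gamma_add_one_add_div_Gamma_add_one hx (by linarith))
  · exact mem_Ioi.2 (by linarith)
  · exact div_pos (Gamma_pos_of_pos (by linarith)) (Gamma_pos_of_pos hx)
  · intro a (ha : 0 < a) b _ hab
    simpa using div_lt_div_of_pos_left hh ha hab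

end Real

theorem stmt12 :
    StrictMonoOn (fun ϑ : ℝ => Real.Gamma ((ϑ + 1) / 2) / Real.Gamma (ϑ / 2))
      (Set.Ioi (0 : ℝ)) := by
  intro a (ha : 0 < a) b (hb : 0 < b) hab
  have := Real.strictMonoOn_Gamma_add_div_Gamma one_half_pos (half_pos ha) (half_pos hb)
    (by linarith)
  simpa only [add_div] using this
end

section
/- If u : ℝⁿ → ℂ lies in H¹(ℝⁿ) with n ≥ 3, then ∫ ‖x‖^(-2) |u(x)|² dx ≤ (2/(n-2))² ∫ ‖∇u(x)‖² dx; in particular for n = 3 the constant is 4. -/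
/-!
In polar coordinates `x = r • ω` an additive Haar measure on a space of dimension `d` becomes
`r ^ (d - 1) dr dσ(ω)`, so with `m = d - 2` it suffices to prove, along every ray
`g r = u (r • ω)`, the one-dimensional inequality
`∫₀^∞ r^(m-1) ‖g‖² ≤ (2/m)² ∫₀^∞ r^(m+1) ‖g'‖²`.
The derivative of `r^m ‖g r‖²` is `m r^(m-1) ‖g‖² + 2 r^m ⟪g, g'⟫`, and AM-GM bounds
`2 r^m |⟪g, g'⟫|` by `(m/2) r^(m-1) ‖g‖² + (2/m) r^(m+1) ‖g'‖²`. Integrating over `[0, R]` leaves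
the boundary term `R^m ‖g R‖²`, which is small for arbitrarily large `R` because
`∫ r^(m+1) ‖g‖² < ∞` on almost every ray, as `u ∈ L²`.
-/

open MeasureTheory Set Filter Metric Module

section Polar

variable {E : Type*} [NormedAddCommGroup E] [NormedSpace ℝ E] [MeasurableSpace E] [BorelSpace E]
  [FiniteDimensional ℝ E] [Nontrivial E] (μ : Measure E) [μ.IsAddHaarMeasure]

theorem lintegral_eq_lintegral_sphere_Ioi {f : E → ENNReal} (hf : Measurable f) :
    ∫⁻ x, f x ∂μ = ∫⁻ ω : sphere (0 : E) 1, ∫⁻ r in Ioi (0 : ℝ),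
      ENNReal.ofReal (r ^ (finrank ℝ E - 1)) * f (r • (ω : E)) ∂volume ∂μ.toSphere := by
  set ψ := homeomorphUnitSphereProd E
  have hψ (x : ({0}ᶜ : Set E)) : f ((ψ x).2.1 • (ψ x).1.1) = f x := by
    rw [← homeomorphUnitSphereProd_symm_apply_coe, ψ.symm_apply_apply]
  conv_lhs => rw [← restrict_compl_singleton (μ := μ) 0,
    ← lintegral_subtype_comap (measurableSet_singleton _).compl]
  simp_rw [← hψ]
  rw [μ.measurePreserving_homeomorphUnitSphereProd.lintegral_comp_emb ψ.measurableEmbedding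
    (fun p => f (p.2.1 • p.1.1)), lintegral_prod _ (by fun_prop)]
  refine lintegral_congr fun ω => ?_
  rw [Measure.volumeIoiPow, lintegral_withDensity_eq_lintegral_mul _ (by fun_prop) (by fun_prop)]
  exact lintegral_subtype_comap measurableSet_Ioi
    (fun r => ENNReal.ofReal (r ^ (finrank ℝ E - 1)) * f (r • (ω : E)))

theorem lintegral_ofReal_eq_lintegral_sphere_Ioi {v : E → ℝ} (hv : Measurable v) :
    ∫⁻ x, ENNReal.ofReal (v x) ∂μ = ∫⁻ ω : sphere (0 : E) 1, ∫⁻ r in Ioi (0 : ℝ),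
      ENNReal.ofReal (r ^ (finrank ℝ E - 1) * v (r • (ω : E))) ∂volume ∂μ.toSphere := by
  rw [lintegral_eq_lintegral_sphere_Ioi μ hv.ennreal_ofReal]
  refine lintegral_congr fun ω => setLIntegral_congr_fun measurableSet_Ioi fun r hr => ?_
  rw [ENNReal.ofReal_mul (pow_nonneg (le_of_lt hr) _)]

lemma ae_lintegral_Ioi_ne_top {v : E → ℝ} (hv : Measurable v)
    (hint : ∫⁻ x, ENNReal.ofReal (v x) ∂μ ≠ ⊤) :
    ∀ᵐ ω : sphere (0 : E) 1 ∂μ.toSphere, ∫⁻ r in Ioi (0 : ℝ),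
      ENNReal.ofReal (r ^ (finrank ℝ E - 1) * v (r • (ω : E))) ∂volume ≠ ⊤ := by
  rw [lintegral_ofReal_eq_lintegral_sphere_Ioi μ hv] at hint
  refine ae_lt_top ?_ hint |>.mono fun ω hω => hω.ne
  exact Measurable.lintegral_prod_right' (ν := volume.restrict (Ioi 0))
    (f := fun p : sphere (0 : E) 1 × ℝ =>
      ENNReal.ofReal (p.2 ^ (finrank ℝ E - 1) * v (p.2 • (p.1 : E))))
    (by fun_prop)

end Polar

section OneDimensional

lemma two_mul_pow_mul_le {m : ℕ} (hm : 1 ≤ m) {r : ℝ} (hr : 0 ≤ r) (a b : ℝ) :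
    2 * r ^ m * (a * b) ≤ m / 2 * r ^ (m - 1) * a ^ 2 + 2 / m * r ^ (m + 1) * b ^ 2 := by
  have hsq : m / 2 * r ^ (m - 1) * a ^ 2 + 2 / m * r ^ (m + 1) * b ^ 2 - 2 * r ^ m * (a * b)
      = m / 2 * r ^ (m - 1) * (a - 2 / m * r * b) ^ 2 := by
    obtain ⟨k, rfl⟩ := Nat.exists_eq_add_of_le' hm
    rw [Nat.add_sub_cancel, pow_succ, pow_succ]
    field_simp
    ring
  have : 0 ≤ m / 2 * r ^ (m - 1) * (a - 2 / m * r * b) ^ 2 := by positivity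
  linarith

lemma frequently_lt_of_lintegral_Ioi_mul_ne_top {f : ℝ → ℝ}
    (hf : ∫⁻ r in Ioi 0, ENNReal.ofReal (r * f r) ≠ ⊤) {c : ℝ} (hc : 0 < c) :
    ∃ᶠ R in atTop, f R < c := by
  rw [frequently_atTop]
  intro M
  by_contra! hM
  refine hf (top_le_iff.mp ?_)
  calc ⊤ = ∫⁻ _ in Ioi (max M 1), ENNReal.ofReal c := by simp [hc]
    _ ≤ ∫⁻ r in Ioi (max M 1), ENNReal.ofReal (r * f r) := by
      refine setLIntegral_mono' measurableSet_Ioi fun r hr => ENNReal.ofReal_le_ofReal ?_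
      have hr1 : 1 ≤ r := (le_max_right M 1).trans hr.le
      nlinarith [hM r ((le_max_left M 1).trans hr.le)]
    _ ≤ ∫⁻ r in Ioi 0, ENNReal.ofReal (r * f r) :=
      lintegral_mono_set (Ioi_subset_Ioi (zero_le_one.trans (le_max_right M 1)))

variable {F : Type*} [NormedAddCommGroup F] [InnerProductSpace ℝ F]

theorem hardy_intervalIntegral {m : ℕ} (hm : 1 ≤ m) {g : ℝ → F} (hg : Differentiable ℝ g) {R : ℝ}
    (hR : 0 ≤ R) (hC : IntegrableOn (fun r => r ^ (m + 1) * ‖deriv g r‖ ^ 2) (Icc 0 R)) :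
    m / 2 * ∫ r in 0..R, r ^ (m - 1) * ‖g r‖ ^ 2
      ≤ R ^ m * ‖g R‖ ^ 2 + 2 / m * ∫ r in 0..R, r ^ (m + 1) * ‖deriv g r‖ ^ 2 := by
  have hA : IntegrableOn (fun r => r ^ (m - 1) * ‖g r‖ ^ 2) (Icc 0 R) :=
    (by have := hg.continuous; fun_prop : Continuous _).integrableOn_Icc
  have hderiv (r : ℝ) : HasDerivAt (fun t => t ^ m * ‖g t‖ ^ 2)
      (m * r ^ (m - 1) * ‖g r‖ ^ 2 + r ^ m * (2 * inner ℝ (g r) (deriv g r))) r :=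
    (hasDerivAt_pow m r).mul (hg r).hasDerivAt.norm_sq
  have key := intervalIntegral.integral_le_sub_of_hasDeriv_right_of_le hR
    (by have := hg.continuous; fun_prop : Continuous _).continuousOn
    (fun r _ => (hderiv r).hasDerivWithinAt) ((hA.const_mul (m / 2)).sub (hC.const_mul (2 / m)))
    fun r hr => ?_
  · simp only [Pi.sub_apply] at key
    rw [intervalIntegral.integral_sub, intervalIntegral.integral_const_mul,
      intervalIntegral.integral_const_mul] at key
    · rw [zero_pow (by omega), zero_mul, sub_zero] at key
      linarith
    · exact (intervalIntegrable_iff_integrableOn_Icc_of_le hR).2 (hA.const_mul _)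
    · exact (intervalIntegrable_iff_integrableOn_Icc_of_le hR).2 (hC.const_mul _)
  · have hinner := neg_le_of_abs_le (abs_real_inner_le_norm (g r) (deriv g r))
    have := two_mul_pow_mul_le hm hr.1.le ‖g r‖ ‖deriv g r‖
    simp only [Pi.sub_apply]
    nlinarith [mul_le_mul_of_nonneg_left hinner (pow_nonneg hr.1.le m)]

theorem hardy_lintegral_Ioc [CompleteSpace F] {m : ℕ} (hm : 1 ≤ m) {g : ℝ → F}
    (hg : Differentiable ℝ g) {R : ℝ} (hR : 0 ≤ R) :
    ∫⁻ r in Ioc 0 R, ENNReal.ofReal (r ^ (m - 1) * ‖g r‖ ^ 2)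
      ≤ ENNReal.ofReal (2 / m * (R ^ m * ‖g R‖ ^ 2)) + ENNReal.ofReal ((2 / m) ^ 2) *
        ∫⁻ r in Ioc 0 R, ENNReal.ofReal (r ^ (m + 1) * ‖deriv g r‖ ^ 2) := by
  have hnonneg {f : ℝ → ℝ} (hf : ∀ r, 0 ≤ r → 0 ≤ f r) : 0 ≤ᵐ[volume.restrict (Ioc 0 R)] f :=
    ae_restrict_of_forall_mem measurableSet_Ioc fun r hr => hf r hr.1.le
  have hCnn := hnonneg (f := fun r => r ^ (m + 1) * ‖deriv g r‖ ^ 2) fun r hr => by positivity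
  obtain hJ | hJ := eq_or_ne (∫⁻ r in Ioc 0 R, ENNReal.ofReal (r ^ (m + 1) * ‖deriv g r‖ ^ 2)) ⊤
  · rw [hJ, ENNReal.mul_top (by simp; positivity)]
    exact le_top
  have hCm : Measurable fun r => r ^ (m + 1) * ‖deriv g r‖ ^ 2 := by
    have := (stronglyMeasurable_deriv g).norm.measurable
    fun_prop
  have hC := (lintegral_ofReal_ne_top_iff_integrable hCm.aestronglyMeasurable hCnn).1 hJ
  have hA : IntegrableOn (fun r => r ^ (m - 1) * ‖g r‖ ^ 2) (Ioc 0 R) :=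
    (by have := hg.continuous; fun_prop : Continuous _).integrableOn_Ioc
  have key := hardy_intervalIntegral hm hg hR ((integrableOn_Icc_iff_integrableOn_Ioc).2 hC)
  rw [intervalIntegral.integral_of_le hR, intervalIntegral.integral_of_le hR] at key
  rw [← ofReal_integral_eq_lintegral_ofReal hA (hnonneg fun r hr => by positivity),
    ← ofReal_integral_eq_lintegral_ofReal hC hCnn, ← ENNReal.ofReal_mul (by positivity),
    ← ENNReal.ofReal_add (by positivity)
      (mul_nonneg (by positivity) (integral_nonneg_of_ae hCnn))]
  refine ENNReal.ofReal_le_ofReal ?_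
  calc ∫ r in Ioc 0 R, r ^ (m - 1) * ‖g r‖ ^ 2
      = 2 / m * (m / 2 * ∫ r in Ioc 0 R, r ^ (m - 1) * ‖g r‖ ^ 2) := by field_simp
    _ ≤ 2 / m * (R ^ m * ‖g R‖ ^ 2 + 2 / m * ∫ r in Ioc 0 R, r ^ (m + 1) * ‖deriv g r‖ ^ 2) := by
      gcongr
    _ = _ := by ring

theorem hardy_lintegral_Ioi [CompleteSpace F] {m : ℕ} (hm : 1 ≤ m) {g : ℝ → F}
    (hg : Differentiable ℝ g)
    (hK : ∫⁻ r in Ioi 0, ENNReal.ofReal (r ^ (m + 1) * ‖g r‖ ^ 2) ≠ ⊤) :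
    ∫⁻ r in Ioi 0, ENNReal.ofReal (r ^ (m - 1) * ‖g r‖ ^ 2)
      ≤ ENNReal.ofReal ((2 / m) ^ 2) *
        ∫⁻ r in Ioi 0, ENNReal.ofReal (r ^ (m + 1) * ‖deriv g r‖ ^ 2) := by
  have hboundary {δ : ℝ} (hδ : 0 < δ) : ∃ᶠ R in atTop, R ^ m * ‖g R‖ ^ 2 < m / 2 * δ := by
    refine frequently_lt_of_lintegral_Ioi_mul_ne_top ?_ (by positivity)
    convert hK using 4 with r
    ring
  have hcover : ⋃ n : ℕ, Ioc (0 : ℝ) n = Ioi 0 :=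
    iUnion_Ioc_eq_Ioi_self_iff.2 fun x _ => exists_nat_ge x
  conv_lhs => rw [← hcover, setLIntegral_iUnion_of_directed _
    (Monotone.directed_le fun i j hij => Ioc_subset_Ioc_right (Nat.cast_le.2 hij))]
  refine iSup_le fun n => ENNReal.le_of_forall_pos_le_add fun δ hδ _ => ?_
  obtain ⟨R, hnR, hR⟩ := (hboundary (NNReal.coe_pos.2 hδ)).forall_exists_of_atTop n
  calc ∫⁻ r in Ioc 0 (n : ℝ), ENNReal.ofReal (r ^ (m - 1) * ‖g r‖ ^ 2)
      ≤ ∫⁻ r in Ioc 0 R, ENNReal.ofReal (r ^ (m - 1) * ‖g r‖ ^ 2) :=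
        lintegral_mono_set (Ioc_subset_Ioc_right hnR)
    _ ≤ ENNReal.ofReal (2 / m * (R ^ m * ‖g R‖ ^ 2)) + ENNReal.ofReal ((2 / m) ^ 2) *
        ∫⁻ r in Ioc 0 R, ENNReal.ofReal (r ^ (m + 1) * ‖deriv g r‖ ^ 2) :=
        hardy_lintegral_Ioc hm hg ((Nat.cast_nonneg n).trans hnR)
    _ ≤ δ + ENNReal.ofReal ((2 / m) ^ 2) *
        ∫⁻ r in Ioi 0, ENNReal.ofReal (r ^ (m + 1) * ‖deriv g r‖ ^ 2) := by
      gcongr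
      · rw [← ENNReal.ofReal_coe_nnreal]
        refine ENNReal.ofReal_le_ofReal ?_
        calc 2 / m * (R ^ m * ‖g R‖ ^ 2) ≤ 2 / m * (m / 2 * δ) := by gcongr
          _ = δ := by field_simp
      · exact Ioc_subset_Ioi_self
    _ = _ := add_comm _ _

end OneDimensional

section Rays

variable {E F : Type*} [NormedAddCommGroup E] [NormedSpace ℝ E] [NormedAddCommGroup F]
  [NormedSpace ℝ F] {u : E → F}

lemma norm_deriv_comp_smul_le (hu : Differentiable ℝ u) {ω : E} (hω : ‖ω‖ = 1) (r : ℝ) :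
    ‖deriv (fun t : ℝ => u (t • ω)) r‖ ≤ ‖fderiv ℝ u (r • ω)‖ := by
  have hsmul : HasDerivAt (fun t : ℝ => t • ω) ω r := by
    simpa using (hasDerivAt_id r).smul_const ω
  have hray : HasDerivAt (fun t : ℝ => u (t • ω)) (fderiv ℝ u (r • ω) ω) r :=
    (hu _).hasFDerivAt.comp_hasDerivAt r hsmul
  simpa [hray.deriv, hω] using (fderiv ℝ u (r • ω)).le_opNorm ω

lemma lintegral_sphere_Ioi_norm_deriv_sq_le [MeasurableSpace E] [BorelSpace E]
    [FiniteDimensional ℝ E] [Nontrivial E] [CompleteSpace F] (μ : Measure E)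
    [μ.IsAddHaarMeasure] (hu : Differentiable ℝ u) :
    ∫⁻ ω : sphere (0 : E) 1, ∫⁻ r in Ioi (0 : ℝ), ENNReal.ofReal
        (r ^ (finrank ℝ E - 1) * ‖deriv (fun t : ℝ => u (t • (ω : E))) r‖ ^ 2) ∂volume ∂μ.toSphere
      ≤ ∫⁻ x, ENNReal.ofReal (‖fderiv ℝ u x‖ ^ 2) ∂μ := by
  rw [lintegral_ofReal_eq_lintegral_sphere_Ioi μ (by fun_prop)]
  refine lintegral_mono fun ω => setLIntegral_mono' measurableSet_Ioi fun r hr => ?_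
  have := norm_deriv_comp_smul_le hu (norm_eq_of_mem_sphere ω) r
  have : 0 ≤ r := le_of_lt hr
  gcongr

end Rays

theorem hardy_inequality {E F : Type*} [NormedAddCommGroup E] [NormedSpace ℝ E]
    [MeasurableSpace E] [BorelSpace E] [FiniteDimensional ℝ E] [NormedAddCommGroup F]
    [InnerProductSpace ℝ F] [CompleteSpace F] (μ : Measure E) [μ.IsAddHaarMeasure]
    (hE : 3 ≤ finrank ℝ E) {u : E → F} (hu : Differentiable ℝ u) (hu2 : MemLp u 2 μ) :
    ∫⁻ x, ENNReal.ofReal (‖x‖ ^ (-(2 : ℝ)) * ‖u x‖ ^ 2) ∂μ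
      ≤ ENNReal.ofReal ((2 / ((finrank ℝ E : ℝ) - 2)) ^ 2) *
        ∫⁻ x, ENNReal.ofReal (‖fderiv ℝ u x‖ ^ 2) ∂μ := by
  have : Nontrivial E := Module.nontrivial_of_finrank_pos (R := ℝ) (by omega)
  obtain ⟨m, hm, hdim⟩ : ∃ m, 1 ≤ m ∧ finrank ℝ E = m + 2 := ⟨finrank ℝ E - 2, by omega, by omega⟩
  have hdim' : finrank ℝ E - 1 = m + 1 := by omega
  have hc : 2 / ((finrank ℝ E : ℝ) - 2) = 2 / m := by rw [hdim]; push_cast; ring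
  have hu_sq : Measurable fun x => ‖u x‖ ^ 2 := (hu.continuous.norm.pow 2).measurable
  have hray (ω : sphere (0 : E) 1) : Differentiable ℝ fun t : ℝ => u (t • (ω : E)) :=
    hu.comp (differentiable_id.smul_const _)
  have hK := ae_lintegral_Ioi_ne_top μ hu_sq
    ((memLp_two_iff_integrable_sq_norm hu2.1).1 hu2).lintegral_lt_top.ne
  have hR := lintegral_sphere_Ioi_norm_deriv_sq_le μ hu
  rw [hdim'] at hK hR
  calc ∫⁻ x, ENNReal.ofReal (‖x‖ ^ (-(2 : ℝ)) * ‖u x‖ ^ 2) ∂μ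
      = ∫⁻ ω : sphere (0 : E) 1, ∫⁻ r in Ioi (0 : ℝ), ENNReal.ofReal
          (r ^ (m + 1) * (‖r • (ω : E)‖ ^ (-(2 : ℝ)) * ‖u (r • (ω : E))‖ ^ 2)) ∂volume
          ∂μ.toSphere := by
        rw [lintegral_ofReal_eq_lintegral_sphere_Ioi μ
          (by exact (measurable_norm.pow_const _).mul hu_sq), hdim']
    _ ≤ ∫⁻ ω : sphere (0 : E) 1, ENNReal.ofReal ((2 / m) ^ 2) * ∫⁻ r in Ioi (0 : ℝ),
          ENNReal.ofReal (r ^ (m + 1) * ‖deriv (fun t : ℝ => u (t • (ω : E))) r‖ ^ 2) ∂volume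
          ∂μ.toSphere := by
        refine lintegral_mono_ae (hK.mono fun ω hω =>
          Eq.trans_le ?_ (hardy_lintegral_Ioi hm (hray ω) hω))
        refine setLIntegral_congr_fun measurableSet_Ioi fun r (hr : 0 < r) => ?_
        rw [norm_smul, norm_eq_of_mem_sphere ω, mul_one, Real.norm_of_nonneg hr.le,
          Real.rpow_neg hr.le, Real.rpow_two, show m + 1 = m - 1 + 2 by omega, pow_add]
        field_simp
    _ ≤ _ := by
        rw [lintegral_const_mul' _ _ ENNReal.ofReal_ne_top, hc]
        gcongr

theorem stmt14_general (n : ℕ) (hn : 3 ≤ n) (u : EuclideanSpace ℝ (Fin n) → ℂ)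
    (hu : Differentiable ℝ u)
    (hu2 : MemLp u 2 (volume : Measure (EuclideanSpace ℝ (Fin n)))) :
    ∫⁻ x : EuclideanSpace ℝ (Fin n),
        ENNReal.ofReal (‖x‖ ^ (-(2 : ℝ)) * ‖u x‖ ^ 2)
      ≤ ENNReal.ofReal ((2 / ((n : ℝ) - 2)) ^ 2) *
          ∫⁻ x : EuclideanSpace ℝ (Fin n), ENNReal.ofReal (‖fderiv ℝ u x‖ ^ 2) := by
  simpa using hardy_inequality volume (by simpa using hn) hu hu2

theorem stmt14 (n : ℕ) (hn : 3 ≤ n) (u : EuclideanSpace ℝ (Fin n) → ℂ)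
    (hu : Differentiable ℝ u)
    (hu2 : MemLp u 2 (volume : Measure (EuclideanSpace ℝ (Fin n))))
    (hu2' : MemLp (fun x => fderiv ℝ u x) 2
      (volume : Measure (EuclideanSpace ℝ (Fin n)))) :
    ∫⁻ x : EuclideanSpace ℝ (Fin n),
        ENNReal.ofReal (‖x‖ ^ (-(2 : ℝ)) * ‖u x‖ ^ 2)
      ≤ ENNReal.ofReal ((2 / ((n : ℝ) - 2)) ^ 2) *
          ∫⁻ x : EuclideanSpace ℝ (Fin n), ENNReal.ofReal (‖fderiv ℝ u x‖ ^ 2) :=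
  stmt14_general n hn u hu hu2
end
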